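/- The sequent I ⊗ A ⊢ A is derivable in LSkT for every formula A, while X ⊢ I ⊗ X is not derivable in LSkT for an atom X. -/

import Mathlib

/-- Formulae of left skew monoidal closed logic: atoms, unit I, ⊗, ⊸. -/
inductive Fma : Type
  | atom : ℕ → Fma
  | I : Fma
  | tens : Fma → Fma → Fma
  | lolli : Fma → Fma → Fma

/-- Trees: formulae, the empty tree, and pairing. -/
inductive Tr : Type
  | fma : Fma → Tr
  | emp : Tr
  | pair : Tr → Tr → Tr

/-- Contexts: trees with a single hole. -/
inductive Ctx : Type
  | hole : Ctx
  | pairL : Ctx → Tr → Ctx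
  | pairR : Tr → Ctx → Ctx

/-- Substitution of a tree into the hole of a context. -/
def plug : Ctx → Tr → Tr
  | Ctx.hole, U => U
  | Ctx.pairL C T, U => Tr.pair (plug C U) T
  | Ctx.pairR T C, U => Tr.pair T (plug C U)

/-- Derivability in the tree sequent calculus LSkT: `TDer T A` means `T ⊢ A`. -/
inductive TDer : Tr → Fma → Prop
  | ax {A} : TDer (Tr.fma A) A
  | IL {T C} : TDer (plug T Tr.emp) C → TDer (plug T (Tr.fma Fma.I)) C
  | IR : TDer Tr.emp Fma.I
  | tensL {T A B C} : TDer (plug T (Tr.pair (Tr.fma A) (Tr.fma B))) C →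
      TDer (plug T (Tr.fma (Fma.tens A B))) C
  | tensR {T U A B} : TDer T A → TDer U B → TDer (Tr.pair T U) (Fma.tens A B)
  | lolliL {T U A B C} : TDer U A → TDer (plug T (Tr.fma B)) C →
      TDer (plug T (Tr.pair (Tr.fma (Fma.lolli A B)) U)) C
  | lolliR {T A B} : TDer (Tr.pair T (Tr.fma A)) B → TDer T (Fma.lolli A B)
  | assoc {T U₀ U₁ U₂ C} : TDer (plug T (Tr.pair U₀ (Tr.pair U₁ U₂))) C →
      TDer (plug T (Tr.pair (Tr.pair U₀ U₁) U₂)) C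
  | unitL {T U C} : TDer (plug T U) C → TDer (plug T (Tr.pair Tr.emp U)) C
  | unitR {T U C} : TDer (plug T (Tr.pair U Tr.emp)) C → TDer (plug T U) C

/-! Interpret formulae in the two-element order `false < true`, reading `⊗` as the left
projection, `I` as `false`, `A ⊸ B` as `B` and atoms as `true`, and a tree by its leftmost
leaf. This is a monoidal closed preorder, so every rule of LSkT preserves `T.eval ≤ A.eval`;
but `X` evaluates to `true` and `I ⊗ X` to `false`. -/

def Fma.eval : Fma → Bool
  | .atom _ => true
  | .I => false
  | .tens A _ => A.eval
  | .lolli _ B => B.eval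

def Tr.eval : Tr → Bool
  | .fma A => A.eval
  | .emp => false
  | .pair T _ => T.eval

lemma Tr.eval_plug_mono {U U' : Tr} (h : U.eval ≤ U'.eval) :
    ∀ C : Ctx, (plug C U).eval ≤ (plug C U').eval
  | .hole => h
  | .pairL C _ => Tr.eval_plug_mono h C
  | .pairR _ _ => le_rfl

theorem TDer.eval_le {T : Tr} {A : Fma} (d : TDer T A) : T.eval ≤ A.eval := by
  induction d with
  | ax | IR => exact le_rfl
  | tensR _ _ ih _ | lolliR _ ih => exact ih
  | IL _ ih | tensL _ ih | lolliL _ _ _ ih | assoc _ ih | unitL _ ih | unitR _ ih =>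
    exact le_trans (Tr.eval_plug_mono (by simp [Tr.eval, Fma.eval]) _) ih

theorem TDer.leftUnitor (A : Fma) : TDer (.fma (.tens .I A)) A :=
  TDer.tensL (T := .hole) <| TDer.IL (T := .pairL .hole (.fma A)) <|
    TDer.unitL (T := .hole) TDer.ax

theorem not_TDer_atom_I_tens (X : ℕ) : ¬ TDer (.fma (.atom X)) (.tens .I (.atom X)) :=
  fun d => absurd d.eval_le (by simp [Tr.eval, Fma.eval])

/-- `I ⊗ A ⊢ A` is derivable in LSkT for every `A`, but `X ⊢ I ⊗ X` is not
derivable for an atom `X`. -/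
theorem lam_derivable_rho_like_underivable :
    (∀ A : Fma, TDer (Tr.fma (Fma.tens Fma.I A)) A) ∧
    (∀ X : ℕ, ¬ TDer (Tr.fma (Fma.atom X)) (Fma.tens Fma.I (Fma.atom X))) :=
  ⟨TDer.leftUnitor, not_TDer_atom_I_tens⟩
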